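/- arXiv:2405.06503 — 3 statements merged into one kernel-verified Lean document; each statement's English description precedes it below -/
import Mathlib

section
/- Let T : [a₀, b₀] → ℝ be C¹ with λ/Λ ≤ T'(x) ≤ Λ/λ for constants 0 < λ < Λ, with T(x) > x on [a₀, b₀] and no fixed points, and let a₁ := T(a₀). Suppose v₀ : [a₀, a₁] → ℝ is continuous, positive, and satisfies the compatibility condition v₀(a₁) = T'(a₀) v₀(a₀). Then v₀ extends uniquely to a continuous positive function v on [a₀, b₁] (b₁ := T(b₀)) satisfying the functional equation v(T(x)) = T'(x) v(x) for all x ∈ [a₀, b₀]. -/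
open Set

/-! Let `S` be the inverse of `T`, mapping `[a₁, b₁]` back into `[a₀, b₀]`. Since `T x - x` has a
positive minimum `δ` on the compact interval, `S` lowers every point of `[a₁, b₁]` by at least `δ`,
so the recursion `v y = T' (S y) * v (S y)` on `[a₁, b₁]`, seeded with `v₀` on `[a₀, a₁)`, reaches
the seed after finitely many steps. Iterating the recursion operator therefore stabilises, which
gives existence; uniqueness, positivity and continuity all follow by induction along this descent.
The compatibility condition is exactly what makes the solution agree with `v₀` at `a₁`. -/

section Descent

variable {a b c δ : ℝ} {S : ℝ → ℝ}

theorem induction_Icc_of_descent_level (hS : MapsTo S (Icc b c) (Icc a c))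
    (hSδ : ∀ y ∈ Icc b c, S y + δ ≤ y) {P : ℕ → ℝ → Prop}
    (base : ∀ n, ∀ y ∈ Ico a b, P n y) (step : ∀ n, ∀ y ∈ Icc b c, P n (S y) → P (n + 1) y) :
    ∀ n : ℕ, ∀ y ∈ Icc a c, y < b + n • δ → P n y := by
  intro n
  induction n with
  | zero => exact fun y hy hyb => base 0 y ⟨hy.1, by simpa using hyb⟩
  | succ n ih =>
    intro y hy hyb
    rcases lt_or_ge y b with hyb' | hby
    · exact base _ y ⟨hy.1, hyb'⟩
    · have hy' : y ∈ Icc b c := ⟨hby, hy.2⟩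
      refine step n y hy' (ih _ (hS hy') ?_)
      rw [succ_nsmul] at hyb
      linarith [hSδ y hy']

def UniformDescent (S : ℝ → ℝ) (a b c : ℝ) : Prop :=
  MapsTo S (Icc b c) (Icc a c) ∧ ∃ δ > 0, ∀ y ∈ Icc b c, S y + δ ≤ y

theorem UniformDescent.induction (hS : UniformDescent S a b c) {P : ℝ → Prop}
    (base : ∀ y ∈ Ico a b, P y) (step : ∀ y ∈ Icc b c, P (S y) → P y) :
    ∀ y ∈ Icc a c, P y := by
  obtain ⟨hmaps, δ, hδ, hSδ⟩ := hS
  obtain ⟨N, hN⟩ := exists_lt_nsmul hδ (c - b)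
  exact fun y hy => induction_Icc_of_descent_level hmaps hSδ (P := fun _ => P)
    (fun _ => base) (fun _ => step) N y hy (by linarith [hy.2])

def IsRecursiveExtension (v₀ g S : ℝ → ℝ) (a b c : ℝ) (v : ℝ → ℝ) : Prop :=
  EqOn v v₀ (Ico a b) ∧ ∀ y ∈ Icc b c, v y = g y * v (S y)

theorem exists_isRecursiveExtension (hab : a ≤ b) (hS : UniformDescent S a b c)
    (v₀ g : ℝ → ℝ) : ∃ v, IsRecursiveExtension v₀ g S a b c v := by
  obtain ⟨hmaps, δ, hδ, hSδ⟩ := hS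
  let F : (ℝ → ℝ) → ℝ → ℝ := fun f y => if y < b then v₀ y else g y * f (S y)
  have hF : ∀ f y, F f y = if y < b then v₀ y else g y * f (S y) := fun _ _ => rfl
  have iterate_of_lt : ∀ n, ∀ y < b, F^[n] v₀ y = v₀ y := by
    rintro (_ | n) y hy
    · rfl
    · rw [Function.iterate_succ_apply', hF, if_pos hy]
  -- after `n` steps the iterates of `F` no longer change below `b + n • δ`
  have stable := induction_Icc_of_descent_level hmaps hSδ
    (P := fun n y => F^[n + 1] v₀ y = F^[n] v₀ y)
    (fun n y hy => by rw [iterate_of_lt _ y hy.2, iterate_of_lt _ y hy.2])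
    (fun n y hy h => by
      rw [Function.iterate_succ_apply' F (n + 1), congrFun (Function.iterate_succ_apply' F n v₀) y,
        hF, hF, if_neg (not_lt.2 hy.1), if_neg (not_lt.2 hy.1), h])
  obtain ⟨N, hN⟩ := exists_lt_nsmul hδ (c - b)
  refine ⟨F^[N] v₀, fun y hy => iterate_of_lt N y hy.2, fun y hy => ?_⟩
  rw [← stable N y ⟨hab.trans hy.1, hy.2⟩ (by linarith [hy.2]), Function.iterate_succ_apply',
    hF, if_neg (not_lt.2 hy.1)]

namespace IsRecursiveExtension

variable {v₀ g v w : ℝ → ℝ}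

theorem eqOn (hS : UniformDescent S a b c) (hv : IsRecursiveExtension v₀ g S a b c v)
    (hw : IsRecursiveExtension v₀ g S a b c w) : EqOn v w (Icc a c) :=
  hS.induction (fun y hy => (hv.1 hy).trans (hw.1 hy).symm)
    (fun y hy h => by rw [hv.2 y hy, hw.2 y hy, h])

theorem pos (hS : UniformDescent S a b c) (hv : IsRecursiveExtension v₀ g S a b c v)
    (hv₀ : ∀ y ∈ Ico a b, 0 < v₀ y) (hg : ∀ y ∈ Icc b c, 0 < g y) : ∀ y ∈ Icc a c, 0 < v y :=
  hS.induction (fun y hy => hv.1 hy ▸ hv₀ y hy)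
    (fun y hy h => hv.2 y hy ▸ mul_pos (hg y hy) h)

theorem continuousOn (hS : UniformDescent S a b c) (hv : IsRecursiveExtension v₀ g S a b c v)
    (hva : ContinuousOn v (Icc a b)) (hg : ContinuousOn g (Icc b c))
    (hSc : ContinuousOn S (Icc b c)) : ContinuousOn v (Icc a c) := by
  refine hS.induction (fun y hy => ?_) (fun y hy h => ?_)
  · refine (hva y (Ico_subset_Icc_self hy)).mono_of_mem_nhdsWithin
      (mem_nhdsWithin.2 ⟨Iio b, isOpen_Iio, hy.2, fun z hz => ⟨hz.2.1, hz.1.le⟩⟩)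
  · have left : ContinuousWithinAt v (Icc a b) y := by
      by_cases hy' : y ∈ Icc a b
      · exact hva y hy'
      · exact continuousWithinAt_of_notMem_closure (by rwa [closure_Icc])
    have right : ContinuousWithinAt v (Icc b c) y :=
      ((hg y hy).mul (h.comp (hSc y hy) hS.1)).congr (fun z hz => hv.2 z hz) (hv.2 y hy)
    exact (left.union right).mono Icc_subset_Icc_union_Icc

end IsRecursiveExtension

end Descent

theorem strictMonoOn_Icc_of_hasDerivAt_pos {f f' : ℝ → ℝ} {a b : ℝ}
    (hf : ∀ x ∈ Icc a b, HasDerivAt f (f' x) x) (hf' : ∀ x ∈ Icc a b, 0 < f' x) :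
    StrictMonoOn f (Icc a b) :=
  strictMonoOn_of_deriv_pos (convex_Icc a b)
    (fun x hx => (hf x hx).continuousAt.continuousWithinAt) fun x hx => by
      rw [interior_Icc] at hx
      rw [(hf x (Ioo_subset_Icc_self hx)).deriv]
      exact hf' x (Ioo_subset_Icc_self hx)

theorem StrictMonoOn.exists_continuousOn_invOn_Icc {f : ℝ → ℝ} {a b : ℝ} (hab : a ≤ b)
    (hf : StrictMonoOn f (Icc a b)) (hfc : ContinuousOn f (Icc a b)) :
    ∃ g : ℝ → ℝ, InvOn g f (Icc a b) (Icc (f a) (f b)) ∧ MapsTo g (Icc (f a) (f b)) (Icc a b) ∧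
      ContinuousOn g (Icc (f a) (f b)) := by
  have himg : f '' Icc a b = Icc (f a) (f b) := hfc.image_Icc_of_monotoneOn hab hf.monotoneOn
  have hbij : BijOn f (Icc a b) (Icc (f a) (f b)) := himg ▸ hf.injOn.bijOn_image
  refine ⟨Function.invFunOn f (Icc a b), hbij.invOn_invFunOn, hbij.surjOn.mapsTo_invFunOn, ?_⟩
  rw [continuousOn_iff_continuous_domRestrict]
  let e := (hf.orderIso f (Icc a b)).trans (OrderIso.setCongr _ _ himg)
  convert continuous_subtype_val.comp e.symm.continuous using 1
  funext y
  have hfy : f (e.symm y) = y := congrArg Subtype.val (e.apply_symm_apply y)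
  simp only [domRestrict_apply, Function.comp_apply, ← hfy]
  exact hf.injOn.leftInvOn_invFunOn (e.symm y).2

section JuliaEquation

variable {a₀ b₀ : ℝ} {T T' S v₀ v : ℝ → ℝ}

theorem exists_uniformDescent_invOn (hab : a₀ ≤ b₀) (hT : StrictMonoOn T (Icc a₀ b₀))
    (hTc : ContinuousOn T (Icc a₀ b₀)) (hgt : ∀ x ∈ Icc a₀ b₀, x < T x) :
    ∃ S : ℝ → ℝ, InvOn S T (Icc a₀ b₀) (Icc (T a₀) (T b₀)) ∧
      MapsTo S (Icc (T a₀) (T b₀)) (Icc a₀ b₀) ∧ ContinuousOn S (Icc (T a₀) (T b₀)) ∧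
      UniformDescent S a₀ (T a₀) (T b₀) := by
  obtain ⟨S, hinv, hSmaps, hSc⟩ := hT.exists_continuousOn_invOn_Icc hab hTc
  obtain ⟨δ, hδ, hδT⟩ := isCompact_Icc.exists_forall_le' (hTc.sub continuousOn_id)
    fun x hx => sub_pos.2 (hgt x hx)
  refine ⟨S, hinv, hSmaps, hSc,
    hSmaps.mono_right (Icc_subset_Icc_right (hgt b₀ ⟨hab, le_rfl⟩).le), δ, hδ, fun y hy => ?_⟩
  have := hδT (S y) (hSmaps hy)
  rw [Pi.sub_apply, id, hinv.2 hy] at this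
  linarith

theorem isRecursiveExtension_of_julia (hTS : RightInvOn S T (Icc (T a₀) (T b₀)))
    (hS : MapsTo S (Icc (T a₀) (T b₀)) (Icc a₀ b₀)) (hv₀ : EqOn v v₀ (Ico a₀ (T a₀)))
    (hv : ∀ x ∈ Icc a₀ b₀, v (T x) = T' x * v x) :
    IsRecursiveExtension v₀ (T' ∘ S) S a₀ (T a₀) (T b₀) v :=
  ⟨hv₀, fun y hy => by rw [Function.comp_apply, ← hv _ (hS hy), hTS hy]⟩

theorem IsRecursiveExtension.julia (hv : IsRecursiveExtension v₀ (T' ∘ S) S a₀ (T a₀) (T b₀) v)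
    (hST : LeftInvOn S T (Icc a₀ b₀)) (hT : MapsTo T (Icc a₀ b₀) (Icc (T a₀) (T b₀))) :
    ∀ x ∈ Icc a₀ b₀, v (T x) = T' x * v x := fun x hx => by
  rw [hv.2 _ (hT hx), Function.comp_apply, hST hx]

end JuliaEquation

theorem unique_extension_julia_equation_general
    (a₀ b₀ : ℝ) (hab : a₀ < b₀)
    (lam Lam : ℝ) (hlam : 0 < lam) (hlL : lam < Lam)
    (T T' : ℝ → ℝ)
    (hderiv : ∀ x ∈ Icc a₀ b₀, HasDerivAt T (T' x) x)
    (hT'cont : ContinuousOn T' (Icc a₀ b₀))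
    (hT'lb : ∀ x ∈ Icc a₀ b₀, lam / Lam ≤ T' x)
    (hgt : ∀ x ∈ Icc a₀ b₀, x < T x)
    (a₁ b₁ : ℝ) (ha₁ : a₁ = T a₀) (hb₁ : b₁ = T b₀)
    (v₀ : ℝ → ℝ)
    (hv₀cont : ContinuousOn v₀ (Icc a₀ a₁))
    (hv₀pos : ∀ x ∈ Icc a₀ a₁, 0 < v₀ x)
    (hcompat : v₀ a₁ = T' a₀ * v₀ a₀) :
    ∃ v : ℝ → ℝ,
      (ContinuousOn v (Icc a₀ b₁) ∧
       (∀ x ∈ Icc a₀ b₁, 0 < v x) ∧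
       (∀ x ∈ Icc a₀ a₁, v x = v₀ x) ∧
       (∀ x ∈ Icc a₀ b₀, v (T x) = T' x * v x)) ∧
      ∀ w : ℝ → ℝ,
        (ContinuousOn w (Icc a₀ b₁) ∧
         (∀ x ∈ Icc a₀ b₁, 0 < w x) ∧
         (∀ x ∈ Icc a₀ a₁, w x = v₀ x) ∧
         (∀ x ∈ Icc a₀ b₀, w (T x) = T' x * w x)) →
        ∀ x ∈ Icc a₀ b₁, w x = v x := by
  subst ha₁ hb₁
  have ha₀ : a₀ ∈ Icc a₀ b₀ := ⟨le_rfl, hab.le⟩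
  have hT'pos : ∀ x ∈ Icc a₀ b₀, 0 < T' x :=
    fun x hx => (div_pos hlam (hlam.trans hlL)).trans_le (hT'lb x hx)
  have hTmono := strictMonoOn_Icc_of_hasDerivAt_pos hderiv hT'pos
  have hTc : ContinuousOn T (Icc a₀ b₀) :=
    fun x hx => (hderiv x hx).continuousAt.continuousWithinAt
  obtain ⟨S, hinv, hSmaps, hSc, hS⟩ := exists_uniformDescent_invOn hab.le hTmono hTc hgt
  obtain ⟨v, hv⟩ := exists_isRecursiveExtension (hgt a₀ ha₀).le hS v₀ (T' ∘ S)
  have hfe := hv.julia hinv.1 hTmono.monotoneOn.mapsTo_Icc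
  have hvv₀ : EqOn v v₀ (Icc a₀ (T a₀)) := by
    rw [← Ico_insert_right (hgt a₀ ha₀).le]
    rintro y (rfl | hy)
    · rw [hfe a₀ ha₀, hv.1 ⟨le_rfl, hgt a₀ ha₀⟩, hcompat]
    · exact hv.1 hy
  refine ⟨v, ⟨hv.continuousOn hS (hv₀cont.congr hvv₀) (hT'cont.comp hSc hSmaps) hSc,
    hv.pos hS (fun y hy => hv₀pos y (Ico_subset_Icc_self hy)) (fun y hy => hT'pos _ (hSmaps hy)),
    hvv₀, hfe⟩, ?_⟩
  rintro w ⟨-, -, hw₀, hw⟩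
  exact fun x hx => (hv.eqOn hS
    (isRecursiveExtension_of_julia hinv.2 hSmaps (fun y hy => hw₀ y (Ico_subset_Icc_self hy))
      hw) hx).symm

/-- Unique continuous positive extension solving the functional equation
`v (T x) = T' x * v x`: a continuous positive `v₀` on the fundamental interval
`[a₀, T a₀]` satisfying the compatibility condition extends uniquely to a
continuous positive solution on `[a₀, T b₀]`. -/
theorem unique_extension_julia_equation
    (a₀ b₀ : ℝ) (hab : a₀ < b₀)
    (lam Lam : ℝ) (hlam : 0 < lam) (hlL : lam < Lam)
    (T T' : ℝ → ℝ)
    (hderiv : ∀ x ∈ Icc a₀ b₀, HasDerivAt T (T' x) x)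
    (hT'cont : ContinuousOn T' (Icc a₀ b₀))
    (hT'lb : ∀ x ∈ Icc a₀ b₀, lam / Lam ≤ T' x)
    (hT'ub : ∀ x ∈ Icc a₀ b₀, T' x ≤ Lam / lam)
    (hgt : ∀ x ∈ Icc a₀ b₀, x < T x)
    (a₁ b₁ : ℝ) (ha₁ : a₁ = T a₀) (hb₁ : b₁ = T b₀)
    (v₀ : ℝ → ℝ)
    (hv₀cont : ContinuousOn v₀ (Icc a₀ a₁))
    (hv₀pos : ∀ x ∈ Icc a₀ a₁, 0 < v₀ x)
    (hcompat : v₀ a₁ = T' a₀ * v₀ a₀) :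
    ∃ v : ℝ → ℝ,
      (ContinuousOn v (Icc a₀ b₁) ∧
       (∀ x ∈ Icc a₀ b₁, 0 < v x) ∧
       (∀ x ∈ Icc a₀ a₁, v x = v₀ x) ∧
       (∀ x ∈ Icc a₀ b₀, v (T x) = T' x * v x)) ∧
      ∀ w : ℝ → ℝ,
        (ContinuousOn w (Icc a₀ b₁) ∧
         (∀ x ∈ Icc a₀ b₁, 0 < w x) ∧
         (∀ x ∈ Icc a₀ a₁, w x = v₀ x) ∧
         (∀ x ∈ Icc a₀ b₀, w (T x) = T' x * w x)) →
        ∀ x ∈ Icc a₀ b₁, w x = v x :=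
  unique_extension_julia_equation_general a₀ b₀ hab lam Lam hlam hlL T T' hderiv hT'cont hT'lb hgt
    a₁ b₁ ha₁ hb₁ v₀ hv₀cont hv₀pos hcompat
end

section
/- Let T : ℝ → ℝ be continuous and non-decreasing, let 𝒮 := {x : T(x) = x}, and suppose μ̄₀, μ̄₁ are continuous densities with T'(x) = μ̄₀(x)/μ̄₁(T(x)) on supp μ₀, and |μ̄₀ − μ̄₁| > 0 on ∂𝒮. Then ∂𝒮 has no accumulation points in supp μ₀; equivalently, in any compact subinterval of supp μ₀ there are only finitely many connected components of the complement of 𝒮. -/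
open Set Filter Topology

/-- If `T` is continuous, non-decreasing, differentiable on the support `D`
with `T' x = μ̄₀ x / μ̄₁ (T x)` (densities continuous, `μ̄₁ > 0`), and
`μ̄₀ ≠ μ̄₁` on the boundary of the fixed-point set `𝒮 = {x | T x = x}`, then
`∂𝒮` has no accumulation point in `D`. -/
theorem boundary_fixed_points_isolated
    (T : ℝ → ℝ) (hTcont : Continuous T) (hTmono : Monotone T)
    (D : Set ℝ)
    (f g : ℝ → ℝ) (hf : Continuous f) (hg : Continuous g)
    (hgpos : ∀ x ∈ D, 0 < g x)
    (hderiv : ∀ x ∈ D, HasDerivAt T (f x / g (T x)) x)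
    (hne : ∀ x ∈ frontier {y : ℝ | T y = y}, f x ≠ g x) :
    ∀ x ∈ D, ¬ AccPt x (Filter.principal (frontier {y : ℝ | T y = y})) := by
  intro x hxD hacc
  set S : Set ℝ := {y : ℝ | T y = y} with hS
  have hSclosed : IsClosed S := isClosed_eq hTcont continuous_id
  have hFsubS : frontier S ⊆ S := hSclosed.frontier_subset
  -- x is in the (closed) frontier
  have hxF : x ∈ frontier S := by
    have : ClusterPt x (𝓟 (frontier S)) := hacc.clusterPt
    have hx : x ∈ closure (frontier S) := mem_closure_iff_clusterPt.2 this
    rwa [isClosed_frontier.closure_eq] at hx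
  have hTx : T x = x := hFsubS hxF
  -- derivative at x
  have hd : HasDerivAt T (f x / g x) x := by
    have := hderiv x hxD
    rwa [hTx] at this
  have hslope : Tendsto (slope T x) (𝓝[≠] x) (𝓝 (f x / g x)) :=
    hasDerivAt_iff_tendsto_slope.1 hd
  -- the accumulation filter
  have hne' : (𝓝[≠] x ⊓ 𝓟 (frontier S)).NeBot := hacc
  have h1 : Tendsto (slope T x) (𝓝[≠] x ⊓ 𝓟 (frontier S)) (𝓝 (f x / g x)) :=
    hslope.mono_left inf_le_left
  have h2 : Tendsto (slope T x) (𝓝[≠] x ⊓ 𝓟 (frontier S)) (𝓝 1) := by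
    have heq : slope T x =ᶠ[𝓝[≠] x ⊓ 𝓟 (frontier S)] fun _ => (1 : ℝ) := by
      have hmem : {y : ℝ | slope T x y = 1} ∈ 𝓝[≠] x ⊓ 𝓟 (frontier S) := by
        refine mem_inf_of_inter (self_mem_nhdsWithin) (mem_principal_self _) ?_
        rintro y ⟨hy1, hy2⟩
        have hyS : T y = y := hFsubS hy2
        have hyx : y ≠ x := hy1
        simp only [Set.mem_setOf_eq, slope_def_field, hyS, hTx]
        exact div_self (sub_ne_zero.2 hyx)
      exact hmem
    exact Tendsto.congr' heq.symm tendsto_const_nhds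
  have : f x / g x = 1 := tendsto_nhds_unique h1 h2
  have hg0 : g x ≠ 0 := ne_of_gt (hgpos x hxD)
  have hfg : f x = g x := by field_simp at this; exact this
  exact hne x hxF hfg
end

section
/- There exists a map T ∈ C¹([0,1]) with 1/2 ≤ T' ≤ 3/2, T(0) = 0, T(x) < x for x ∈ (0,1], and such that the infinite product ∏_{i ≥ 0} T'(Tⁱ(1/2)) diverges to +∞. -/
/-!
In the coordinate `u = 20 / x` the map `T = parabolicMap` reads
`u ↦ u + 1 + (3 / 2π) sin (2πu) / u`: a unit translation plus a perturbation which, together with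
its derivative, is `O(1/u)`. Back in `x`, `T` is therefore `C¹` on `[0, 1]`, tangent to the identity
at `0`, with `T'` close to `1`. The orbit of `1/2` is `u = n + 40`, where the perturbation vanishes
but has derivative `3/u`; so `T'(Tⁿ(1/2)) = (1 + 3/u) (u/(u+1))² = u (u+3) / (u+1)²`, and the
product of these telescopes to `40 (N+41)(N+42) / (41·42·(N+40))`, which grows linearly in `N`.
-/

open Set Filter Finset

open Real Asymptotics Topology

section Oscillation

variable (c : ℝ)

theorem abs_sq_mul_sin_div_le (x : ℝ) : |x ^ 2 * sin (c / x)| ≤ x ^ 2 := by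
  rw [abs_mul, abs_pow, sq_abs]
  exact mul_le_of_le_one_right (sq_nonneg x) (abs_sin_le_one _)

theorem hasDerivAt_sq_mul_sin_div {x : ℝ} (hx : x ≠ 0) :
    HasDerivAt (fun y => y ^ 2 * sin (c / y)) (2 * x * sin (c / x) - c * cos (c / x)) x := by
  refine ((hasDerivAt_pow 2 x).fun_mul
    ((hasDerivAt_const x c).fun_div (hasDerivAt_id x) hx).sin).congr_deriv ?_
  simp only [id]
  field_simp
  ring

theorem hasDerivAt_sq_mul_sin_div_zero : HasDerivAt (fun y => y ^ 2 * sin (c / y)) 0 0 := by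
  rw [hasDerivAt_iff_isLittleO_nhds_zero]
  have hbig : (fun h : ℝ => h ^ 2 * sin (c / h)) =O[𝓝 0] fun h => h ^ 2 :=
    .of_bound' (Eventually.of_forall fun h => by
      simpa only [norm_eq_abs, abs_pow, sq_abs] using abs_sq_mul_sin_div_le c h)
  simpa using hbig.trans_isLittleO (isLittleO_pow_id one_lt_two)

theorem continuous_mul_cos_div : Continuous fun x : ℝ => x * cos (c / x) := by
  refine continuous_iff_continuousAt.2 fun x => ?_
  rcases eq_or_ne x 0 with rfl | hx
  · have : Tendsto (fun y : ℝ => y * cos (c / y)) (𝓝 0) (𝓝 0) :=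
      squeeze_zero_norm (fun y => by
        simpa only [norm_mul, norm_eq_abs] using
          mul_le_of_le_one_right (abs_nonneg y) (abs_cos_le_one _)) tendsto_norm_zero
    simpa [ContinuousAt] using this
  · fun_prop (disch := exact hx)

theorem differentiable_sq_mul_sin_div : Differentiable ℝ fun x : ℝ => x ^ 2 * sin (c / x) := by
  intro x
  rcases eq_or_ne x 0 with rfl | hx
  · exact (hasDerivAt_sq_mul_sin_div_zero c).differentiableAt
  · exact (hasDerivAt_sq_mul_sin_div c hx).differentiableAt

end Oscillation

theorem prod_range_mul_div_sq (a : ℝ) (ha : 0 < a) (N : ℕ) :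
    ∏ i ∈ range N, (i + a) * (i + a + 3) / (i + a + 1) ^ 2 =
      a * (N + a + 1) * (N + a + 2) / ((a + 1) * (a + 2) * (N + a)) := by
  induction N with
  | zero =>
    simp only [prod_range_zero, Nat.cast_zero, zero_add]
    field_simp
  | succ N ih =>
    rw [prod_range_succ, ih]
    push_cast
    field_simp
    ring

theorem tendsto_prod_range_mul_div_sq (a : ℝ) (ha : 0 < a) :
    Tendsto (fun N : ℕ => ∏ i ∈ range N, (i + a) * (i + a + 3) / (i + a + 1) ^ 2) atTop atTop := by
  refine tendsto_atTop_mono (fun N => ?_) <|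
    tendsto_natCast_atTop_atTop.const_mul_atTop (by positivity : 0 < a / ((a + 1) * (a + 2)))
  rw [prod_range_mul_div_sq a ha, div_mul_eq_mul_div,
    div_le_div_iff₀ (by positivity) (by positivity)]
  have hN : (0 : ℝ) ≤ N := N.cast_nonneg
  have : (N : ℝ) * (N + a) ≤ (N + a + 1) * (N + a + 2) := by nlinarith
  calc a * N * ((a + 1) * (a + 2) * (N + a)) = a * ((a + 1) * (a + 2)) * (N * (N + a)) := by ring
    _ ≤ a * ((a + 1) * (a + 2)) * ((N + a + 1) * (N + a + 2)) := by gcongr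
    _ = _ := by ring

noncomputable def parabolicMapDenom (x : ℝ) : ℝ :=
  20 + x + 3 / (40 * π) * (x ^ 2 * sin (40 * π / x))

noncomputable def parabolicMap (x : ℝ) : ℝ := 20 * x / parabolicMapDenom x

noncomputable def parabolicMapDeriv (x : ℝ) : ℝ :=
  20 * (20 + 3 * (x * cos (40 * π / x)) - 3 / (40 * π) * (x ^ 2 * sin (40 * π / x))) /
    parabolicMapDenom x ^ 2

theorem hasDerivAt_parabolicMap {x : ℝ} (hx : parabolicMapDenom x ≠ 0) :
    HasDerivAt parabolicMap (parabolicMapDeriv x) x := by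
  obtain ⟨d, hd, hxd⟩ : ∃ d, HasDerivAt (fun y => y ^ 2 * sin (40 * π / y)) d x ∧
      x * d = 2 * (x ^ 2 * sin (40 * π / x)) - 40 * π * (x * cos (40 * π / x)) := by
    rcases eq_or_ne x 0 with rfl | hx0
    · -- `x * d` vanishes at `0`, so the formula for `parabolicMapDeriv` holds there as well
      exact ⟨0, hasDerivAt_sq_mul_sin_div_zero _, by simp⟩
    · exact ⟨_, hasDerivAt_sq_mul_sin_div _ hx0, by ring⟩
  have hD : HasDerivAt parabolicMapDenom (1 + 3 / (40 * π) * d) x :=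
    ((hasDerivAt_id' x).const_add 20).fun_add (hd.const_mul (3 / (40 * π)))
  refine (((hasDerivAt_id' x).const_mul 20).fun_div hD hx).congr_deriv ?_
  have hε : 3 / (40 * π) * (40 * π) = 3 := div_mul_cancel₀ _ (by positivity)
  rw [parabolicMapDeriv]
  congr 1
  rw [parabolicMapDenom]
  linear_combination (-20 * (3 / (40 * π))) * hxd + 20 * (x * cos (40 * π / x)) * hε

theorem abs_perturbation_le (x : ℝ) :
    |3 / (40 * π) * (x ^ 2 * sin (40 * π / x))| ≤ x ^ 2 / 40 := by
  have hε : 3 / (40 * π) ≤ 1 / 40 := by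
    rw [div_le_div_iff₀ (by positivity) (by norm_num)]; nlinarith [pi_gt_three]
  rw [abs_mul, abs_of_pos (by positivity)]
  calc _ ≤ 1 / 40 * x ^ 2 := mul_le_mul hε (abs_sq_mul_sin_div_le _ x) (abs_nonneg _) (by norm_num)
    _ = x ^ 2 / 40 := by ring

theorem parabolicMapDenom_mem_Icc {x : ℝ} (hx : x ∈ Icc (0 : ℝ) 1) :
    parabolicMapDenom x ∈ Icc (19 : ℝ) 22 := by
  have hw := abs_le.1 (abs_perturbation_le x)
  have hx2 : x ^ 2 ≤ 1 := pow_le_one₀ hx.1 hx.2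
  constructor <;> simp only [parabolicMapDenom] <;> linarith [hx.1, hx.2]

theorem parabolicMapDenom_ne_zero {x : ℝ} (hx : x ∈ Icc (0 : ℝ) 1) : parabolicMapDenom x ≠ 0 :=
  ((parabolicMapDenom_mem_Icc hx).1.trans_lt' (by norm_num : (0 : ℝ) < 19)).ne'

theorem parabolicMapDeriv_mem_Icc {x : ℝ} (hx : x ∈ Icc (0 : ℝ) 1) :
    parabolicMapDeriv x ∈ Icc (1 / 2 : ℝ) (3 / 2) := by
  obtain ⟨hD₁, hD₂⟩ := parabolicMapDenom_mem_Icc hx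
  have hw := abs_le.1 (abs_perturbation_le x)
  have hx2 : x ^ 2 ≤ 1 := pow_le_one₀ hx.1 hx.2
  have hc : |x * cos (40 * π / x)| ≤ 1 := by
    rw [abs_mul, abs_of_nonneg hx.1]
    exact mul_le_one₀ hx.2 (abs_nonneg _) (abs_cos_le_one _)
  obtain ⟨hc₁, hc₂⟩ := abs_le.1 hc
  have hD : 0 < parabolicMapDenom x ^ 2 := by positivity
  rw [parabolicMapDeriv, Set.mem_Icc, le_div_iff₀ hD, div_le_iff₀ hD]
  constructor <;> nlinarith

theorem continuousOn_parabolicMapDeriv : ContinuousOn parabolicMapDeriv (Icc 0 1) := by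
  have hw := (differentiable_sq_mul_sin_div (40 * π)).continuous
  have hD : Continuous parabolicMapDenom :=
    (continuous_const.add continuous_id).add (continuous_const.mul hw)
  have hN : Continuous fun x : ℝ =>
      20 * (20 + 3 * (x * cos (40 * π / x)) - 3 / (40 * π) * (x ^ 2 * sin (40 * π / x))) :=
    continuous_const.mul ((continuous_const.add (continuous_const.mul (continuous_mul_cos_div _))).sub
      (continuous_const.mul hw))
  exact hN.continuousOn.div (hD.pow 2).continuousOn fun x hx =>
    pow_ne_zero 2 (parabolicMapDenom_ne_zero hx)

theorem parabolicMap_lt {x : ℝ} (hx : x ∈ Ioc (0 : ℝ) 1) : parabolicMap x < x := by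
  have hw := abs_le.1 (abs_perturbation_le x)
  have hD : 20 < parabolicMapDenom x := by
    rw [parabolicMapDenom]; nlinarith [hx.1, hx.2]
  rw [parabolicMap, div_lt_iff₀ (by linarith)]
  nlinarith [hx.1]

theorem forty_pi_div_orbit (n : ℕ) :
    40 * π / (20 / ((n : ℝ) + 40)) = ((n + 40 : ℕ) : ℝ) * (2 * π) := by
  push_cast
  field_simp
  ring

theorem parabolicMap_orbit (n : ℕ) : parabolicMap (20 / (n + 40)) = 20 / (n + 41) := by
  rw [parabolicMap, parabolicMapDenom, forty_pi_div_orbit, sin_periodic.nat_mul_eq, sin_zero]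
  field_simp
  ring

theorem parabolicMap_iterate_half (n : ℕ) : parabolicMap^[n] (1 / 2) = 20 / (n + 40) := by
  induction n with
  | zero => norm_num
  | succ n ih =>
    rw [Function.iterate_succ_apply', ih, parabolicMap_orbit]
    push_cast
    ring

theorem parabolicMapDeriv_orbit (n : ℕ) :
    parabolicMapDeriv (20 / (n + 40)) = (n + 40) * (n + 40 + 3) / (n + 40 + 1) ^ 2 := by
  rw [parabolicMapDeriv, parabolicMapDenom, forty_pi_div_orbit, sin_periodic.nat_mul_eq, sin_zero,
    cos_nat_mul_two_pi]
  field_simp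
  ring

/-- There exists a `C¹` map `T` on `[0,1]` with `1/2 ≤ T' ≤ 3/2`, `T 0 = 0`,
`T x < x` on `(0,1]`, such that the product `∏_{i<n} T'(Tⁱ(1/2))` diverges
to `+∞`. -/
theorem exists_map_with_divergent_product :
    ∃ T T' : ℝ → ℝ,
      (∀ x ∈ Icc (0:ℝ) 1, HasDerivAt T (T' x) x) ∧
      ContinuousOn T' (Icc (0:ℝ) 1) ∧
      (∀ x ∈ Icc (0:ℝ) 1, 1/2 ≤ T' x ∧ T' x ≤ 3/2) ∧
      T 0 = 0 ∧
      (∀ x ∈ Ioc (0:ℝ) 1, T x < x) ∧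
      Tendsto (fun n : ℕ => ∏ i ∈ Finset.range n, T' (T^[i] (1/2 : ℝ)))
        atTop atTop := by
  refine ⟨parabolicMap, parabolicMapDeriv,
    fun x hx => hasDerivAt_parabolicMap (parabolicMapDenom_ne_zero hx),
    continuousOn_parabolicMapDeriv, fun x hx => parabolicMapDeriv_mem_Icc hx,
    by simp [parabolicMap], fun x hx => parabolicMap_lt hx, ?_⟩
  simp only [parabolicMap_iterate_half, parabolicMapDeriv_orbit]
  exact tendsto_prod_range_mul_div_sq 40 (by norm_num)
end
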